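/- arXiv:0908.2051 — 3 statements merged into one kernel-verified Lean document; each statement's English description precedes it below -/
import Mathlib

section
/- Let g ∈ L²(ℝᵈ) and let Λ = Aℤ^{2d} be a lattice such that the Gabor system 𝒢(g,Λ) satisfies the Bessel condition with bound B. Let v : ℝ^{2d} → (0,∞) be an even submultiplicative weight, and suppose the bounded sequences a_ν (ν ∈ Λ) satisfy Σ_{ν∈Λ} ‖a_ν‖_∞ v(ν) ≤ K < ∞. Then S = Σ_{ν∈Λ} π(ν) M_{a_ν} converges absolutely in operator norm on L²(ℝᵈ) and for every N ≥ 0, ‖S − Σ_{|ν|≤N} π(ν) M_{a_ν}‖_{L²→L²} ≤ B K · sup_{ν∈Λ, |ν|>N} v(ν)^{−1}. -/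
open MeasureTheory Complex Filter
open scoped InnerProductSpace ENNReal

noncomputable section

/-- `ℝᵈ` with the Euclidean norm. -/
abbrev Ed (d : ℕ) := EuclideanSpace ℝ (Fin d)

/-- `L²(ℝᵈ)`. -/
abbrev Ltwo (d : ℕ) := Lp ℂ 2 (volume : Measure (Ed d))

/-- The index group `ℤ^{2d}` of the lattice `Λ = Aℤ^{2d}`. -/
abbrev Idx (d : ℕ) := Fin (d + d) → ℤ

/-- The Euclidean norm on the time-frequency plane `ℝᵈ × ℝᵈ ≅ ℝ^{2d}`. -/
def pnorm {d : ℕ} (z : Ed d × Ed d) : ℝ := Real.sqrt (‖z.1‖ ^ 2 + ‖z.2‖ ^ 2)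

/-- The lattice point `A k ∈ ℝ^{2d}` (for `k ∈ ℤ^{2d}`), split as a pair in `ℝᵈ × ℝᵈ`. -/
def latt {d : ℕ} (A : Matrix (Fin (d + d)) (Fin (d + d)) ℝ) (k : Idx d) : Ed d × Ed d :=
  ((WithLp.toLp 2 (fun i => A.mulVec (fun j => (k j : ℝ)) (Fin.castAdd d i)) : EuclideanSpace ℝ (Fin d)),
   (WithLp.toLp 2 (fun i => A.mulVec (fun j => (k j : ℝ)) (Fin.natAdd d i)) : EuclideanSpace ℝ (Fin d)))

/-- `U` is the family of time-frequency shifts on `L²(ℝᵈ)`: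
`(U (x, ξ) f)(t) = e^{2πi ξ·t} f(t - x)`.  (This formula determines each `U z` as the
unitary operator `π(z)`.) -/
def IsTFS {d : ℕ} (U : Ed d × Ed d → (Ltwo d →L[ℂ] Ltwo d)) : Prop :=
  ∀ z : Ed d × Ed d, ∀ f : Ltwo d,
    (U z f : Ed d → ℂ) =ᵐ[volume]
      fun t => Complex.exp (2 * Real.pi * Complex.I * (⟪z.2, t⟫_ℝ : ℂ)) * f (t - z.1)

/-- `M` is the Gabor multiplier with window `g`, lattice `Aℤ^{2d}` and symbol `a`:
`M f = Σ_μ a(μ) ⟨f, π(μ)g⟩ π(μ)g`.  (Mathlib's inner product is conjugate-linear in the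
first argument, so the paper's `⟨f, π(μ)g⟩` is `⟪π(μ)g, f⟫` here.) -/
def IsGM {d : ℕ} (U : Ed d × Ed d → (Ltwo d →L[ℂ] Ltwo d)) (g : Ltwo d)
    (A : Matrix (Fin (d + d)) (Fin (d + d)) ℝ) (a : Idx d → ℂ)
    (M : Ltwo d →L[ℂ] Ltwo d) : Prop :=
  ∀ f : Ltwo d, M f = ∑' μ : Idx d, (a μ * ⟪U (latt A μ) g, f⟫_ℂ) • U (latt A μ) g

/-- The Gabor system `{π(λ)g : λ ∈ Aℤ^{2d}}` satisfies the Bessel condition with bound `B`: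
`Σ_λ |⟨f, π(λ)g⟩|² ≤ B ‖f‖²` for all `f ∈ L²` (stated via finite partial sums, which is
equivalent to summability together with the bound on the sum). -/
def Bessel {d : ℕ} (U : Ed d × Ed d → (Ltwo d →L[ℂ] Ltwo d)) (g : Ltwo d)
    (A : Matrix (Fin (d + d)) (Fin (d + d)) ℝ) (B : ℝ) : Prop :=
  ∀ f : Ltwo d, ∀ F : Finset (Idx d),
    ∑ k ∈ F, ‖(⟪U (latt A k) g, f⟫_ℂ : ℂ)‖ ^ 2 ≤ B * ‖f‖ ^ 2

set_option maxHeartbeats 1000000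
set_option synthInstance.maxHeartbeats 400000

/-- Bessel window, even submultiplicative weight `v`, and
`Σ_ν ‖a_ν‖_∞ v(ν) ≤ K`: the sum of shifted Gabor multipliers converges absolutely in
operator norm and the tail error is at most `B K · sup_{|ν|>N} v(ν)⁻¹`. -/
theorem statement2 (d : ℕ) (A : Matrix (Fin (d + d)) (Fin (d + d)) ℝ) (hA : IsUnit A.det)
    (g : Ltwo d) (U : Ed d × Ed d → (Ltwo d →L[ℂ] Ltwo d)) (hU : IsTFS U)
    (B : ℝ) (hB : Bessel U g A B)
    (v : Ed d × Ed d → ℝ) (hv_pos : ∀ z, 0 < v z) (hv_even : ∀ z, v (-z) = v z)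
    (hv_submul : ∀ z w, v (z + w) ≤ v z * v w)
    (a : Idx d → lp (fun _ : Idx d => ℂ) ∞)
    (M : Idx d → (Ltwo d →L[ℂ] Ltwo d))
    (hM : ∀ ν : Idx d, IsGM U g A (fun μ => a ν μ) (M ν))
    (K : ℝ) (hsum : Summable fun ν : Idx d => ‖a ν‖ * v (latt A ν))
    (hK : ∑' ν : Idx d, ‖a ν‖ * v (latt A ν) ≤ K) :
    Summable (fun ν : Idx d => ‖(U (latt A ν)).comp (M ν)‖) ∧
    ∀ N : ℝ, 0 ≤ N →
      ‖(∑' ν : Idx d, (U (latt A ν)).comp (M ν)) -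
          ∑' ν : {k : Idx d // pnorm (latt A k) ≤ N}, (U (latt A ν.1)).comp (M ν.1)‖ ≤
        B * K * ⨆ ν : {k : Idx d // N < pnorm (latt A k)}, (v (latt A ν.1))⁻¹ := by

  classical
  -- time-frequency shifts are norm non-increasing
  have hU1 : ∀ z (f : Ltwo d), ‖U z f‖ ≤ ‖f‖ := by
    intro z f
    rw [Lp.norm_def, Lp.norm_def]
    have h1 : eLpNorm (U z f : Ed d → ℂ) 2 volume = eLpNorm (f : Ed d → ℂ) 2 volume := by
      rw [eLpNorm_congr_ae (hU z f)]
      have h2 : eLpNorm (fun t => Complex.exp (2 * Real.pi * Complex.I *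
            (⟪z.2, t⟫_ℝ : ℂ)) * f (t - z.1)) 2 (volume : Measure (Ed d))
          = eLpNorm (fun t : Ed d => f (t - z.1)) 2 volume := by
        apply eLpNorm_congr_norm_ae
        refine Eventually.of_forall fun t => ?_
        rw [norm_mul]
        have : Complex.exp (2 * Real.pi * Complex.I * (⟪z.2, t⟫_ℝ : ℂ))
            = Complex.exp ((2 * Real.pi * ⟪z.2, t⟫_ℝ : ℝ) * Complex.I) := by
          push_cast; ring_nf
        rw [this, Complex.norm_exp_ofReal_mul_I, one_mul]
      rw [h2]
      have h3 : (fun t : Ed d => f (t - z.1)) = (f : Ed d → ℂ) ∘ (fun t : Ed d => t + (-z.1)) := by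
        funext t; simp [sub_eq_add_neg]
      rw [h3]
      exact eLpNorm_comp_measurePreserving (Lp.aestronglyMeasurable f)
        (measurePreserving_add_right volume (-z.1))
    rw [h1]
  -- the Bessel bound forces `B ≥ 0`
  have hB0 : 0 ≤ B := by
    have hms : MeasurableSet (Metric.ball (0 : Ed d) 1) := measurableSet_ball
    have hμ : volume (Metric.ball (0 : Ed d) 1) ≠ ∞ := measure_ball_lt_top.ne
    have hfn : 0 < ‖(indicatorConstLp 2 hms hμ (1 : ℂ) : Ltwo d)‖ := by
      rw [norm_indicatorConstLp (by norm_num) (by norm_num)]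
      have hpos : 0 < volume (Metric.ball (0 : Ed d) 1) :=
        Metric.measure_ball_pos volume 0 one_pos
      have h4 := ENNReal.toReal_pos hpos.ne' hμ
      simp only [norm_one, one_mul]
      exact Real.rpow_pos_of_pos h4 _
    have h5 := hB (indicatorConstLp 2 hms hμ (1 : ℂ)) ∅
    simp only [Finset.sum_empty] at h5
    by_contra hc
    push_neg at hc
    exact absurd h5 (not_le.mpr (mul_neg_of_neg_of_pos hc (pow_pos hfn 2)))
  -- Cauchy–Schwarz with the Bessel bound
  have hCS : ∀ (f h : Ltwo d) (F : Finset (Idx d)),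
      ∑ k ∈ F, ‖⟪U (latt A k) g, f⟫_ℂ‖ * ‖⟪U (latt A k) g, h⟫_ℂ‖ ≤ B * ‖f‖ * ‖h‖ := by
    intro f h F
    have h1 := Finset.sum_mul_sq_le_sq_mul_sq F (fun k => ‖⟪U (latt A k) g, f⟫_ℂ‖)
      (fun k => ‖⟪U (latt A k) g, h⟫_ℂ‖)
    have h2 := hB f F
    have h3 := hB h F
    have hnn : 0 ≤ ∑ k ∈ F, ‖⟪U (latt A k) g, f⟫_ℂ‖ * ‖⟪U (latt A k) g, h⟫_ℂ‖ :=
      Finset.sum_nonneg fun k _ => mul_nonneg (norm_nonneg _) (norm_nonneg _)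
    have hq : 0 ≤ ∑ k ∈ F, ‖⟪U (latt A k) g, h⟫_ℂ‖ ^ 2 :=
      Finset.sum_nonneg fun k _ => sq_nonneg _
    have key : (∑ k ∈ F, ‖⟪U (latt A k) g, f⟫_ℂ‖ * ‖⟪U (latt A k) g, h⟫_ℂ‖) ^ 2
        ≤ (B * ‖f‖ * ‖h‖) ^ 2 := by
      calc (∑ k ∈ F, ‖⟪U (latt A k) g, f⟫_ℂ‖ * ‖⟪U (latt A k) g, h⟫_ℂ‖) ^ 2
          ≤ (∑ k ∈ F, ‖⟪U (latt A k) g, f⟫_ℂ‖ ^ 2) * ∑ k ∈ F, ‖⟪U (latt A k) g, h⟫_ℂ‖ ^ 2 := h1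
        _ ≤ (B * ‖f‖ ^ 2) * (B * ‖h‖ ^ 2) :=
            mul_le_mul h2 h3 hq (mul_nonneg hB0 (sq_nonneg _))
        _ = (B * ‖f‖ * ‖h‖) ^ 2 := by ring
    calc ∑ k ∈ F, ‖⟪U (latt A k) g, f⟫_ℂ‖ * ‖⟪U (latt A k) g, h⟫_ℂ‖
        = Real.sqrt ((∑ k ∈ F, ‖⟪U (latt A k) g, f⟫_ℂ‖ * ‖⟪U (latt A k) g, h⟫_ℂ‖) ^ 2) :=
          (Real.sqrt_sq hnn).symm
      _ ≤ Real.sqrt ((B * ‖f‖ * ‖h‖) ^ 2) := Real.sqrt_le_sqrt key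
      _ = B * ‖f‖ * ‖h‖ := Real.sqrt_sq
          (mul_nonneg (mul_nonneg hB0 (norm_nonneg _)) (norm_nonneg _))
  -- the Gabor multipliers are bounded by `B ‖a ν‖`
  have hMnorm : ∀ ν (f : Ltwo d), ‖M ν f‖ ≤ B * ‖a ν‖ * ‖f‖ := by
    intro ν f
    by_cases hsm : Summable (fun μ : Idx d =>
        ((a ν μ : ℂ) * ⟪U (latt A μ) g, f⟫_ℂ) • U (latt A μ) g)
    · have hinner : ∀ y : Ltwo d, ⟪y, M ν f⟫_ℂ
          = ∑' μ : Idx d, ((a ν μ : ℂ) * ⟪U (latt A μ) g, f⟫_ℂ) * ⟪y, U (latt A μ) g⟫_ℂ := by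
        intro y
        calc ⟪y, M ν f⟫_ℂ = innerSL ℂ y (M ν f) := rfl
          _ = innerSL ℂ y (∑' μ : Idx d,
              ((a ν μ : ℂ) * ⟪U (latt A μ) g, f⟫_ℂ) • U (latt A μ) g) := by rw [hM ν f]
          _ = ∑' μ : Idx d, innerSL ℂ y
              (((a ν μ : ℂ) * ⟪U (latt A μ) g, f⟫_ℂ) • U (latt A μ) g) :=
            ContinuousLinearMap.map_tsum _ hsm
          _ = ∑' μ : Idx d, ((a ν μ : ℂ) * ⟪U (latt A μ) g, f⟫_ℂ) * ⟪y, U (latt A μ) g⟫_ℂ :=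
            tsum_congr fun μ => by
              rw [show (innerSL ℂ y) (((a ν μ : ℂ) * ⟪U (latt A μ) g, f⟫_ℂ) • U (latt A μ) g)
                = ⟪y, ((a ν μ : ℂ) * ⟪U (latt A μ) g, f⟫_ℂ) • U (latt A μ) g⟫_ℂ from rfl,
                inner_smul_right]
      have hb : ∀ F : Finset (Idx d),
          ∑ μ ∈ F, ‖((a ν μ : ℂ) * ⟪U (latt A μ) g, f⟫_ℂ) * ⟪M ν f, U (latt A μ) g⟫_ℂ‖
            ≤ ‖a ν‖ * (B * ‖f‖ * ‖M ν f‖) := by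
        intro F
        have step : ∀ μ ∈ F,
            ‖((a ν μ : ℂ) * ⟪U (latt A μ) g, f⟫_ℂ) * ⟪M ν f, U (latt A μ) g⟫_ℂ‖
              ≤ ‖a ν‖ * (‖⟪U (latt A μ) g, f⟫_ℂ‖ * ‖⟪U (latt A μ) g, M ν f⟫_ℂ‖) := by
          intro μ _
          rw [norm_mul, norm_mul, ← norm_inner_symm (M ν f) (U (latt A μ) g), mul_assoc]
          exact mul_le_mul_of_nonneg_right
            (lp.norm_apply_le_norm ENNReal.top_ne_zero (a ν) μ)
            (mul_nonneg (norm_nonneg _) (norm_nonneg _))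
        calc ∑ μ ∈ F, ‖((a ν μ : ℂ) * ⟪U (latt A μ) g, f⟫_ℂ) * ⟪M ν f, U (latt A μ) g⟫_ℂ‖
            ≤ ∑ μ ∈ F, ‖a ν‖ * (‖⟪U (latt A μ) g, f⟫_ℂ‖ * ‖⟪U (latt A μ) g, M ν f⟫_ℂ‖) :=
              Finset.sum_le_sum step
          _ = ‖a ν‖ * ∑ μ ∈ F, ‖⟪U (latt A μ) g, f⟫_ℂ‖ * ‖⟪U (latt A μ) g, M ν f⟫_ℂ‖ := by
              rw [Finset.mul_sum]
          _ ≤ ‖a ν‖ * (B * ‖f‖ * ‖M ν f‖) :=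
              mul_le_mul_of_nonneg_left (hCS f (M ν f) F) (norm_nonneg _)
      have hsn : Summable (fun μ : Idx d =>
          ‖((a ν μ : ℂ) * ⟪U (latt A μ) g, f⟫_ℂ) * ⟪M ν f, U (latt A μ) g⟫_ℂ‖) :=
        summable_of_sum_le (fun μ => norm_nonneg _) hb
      have hx2 : ‖M ν f‖ ^ 2 ≤ ‖a ν‖ * (B * ‖f‖ * ‖M ν f‖) := by
        have h6 : ‖(⟪M ν f, M ν f⟫_ℂ)‖ = ‖M ν f‖ ^ 2 := by
          rw [@inner_self_eq_norm_sq_to_K ℂ]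
          simp [norm_pow, Complex.norm_real, norm_norm]
        calc ‖M ν f‖ ^ 2 = ‖(⟪M ν f, M ν f⟫_ℂ)‖ := h6.symm
          _ = ‖∑' μ : Idx d, ((a ν μ : ℂ) * ⟪U (latt A μ) g, f⟫_ℂ)
              * ⟪M ν f, U (latt A μ) g⟫_ℂ‖ := by rw [hinner (M ν f)]
          _ ≤ ∑' μ : Idx d, ‖((a ν μ : ℂ) * ⟪U (latt A μ) g, f⟫_ℂ)
              * ⟪M ν f, U (latt A μ) g⟫_ℂ‖ := norm_tsum_le_tsum_norm hsn
          _ ≤ ‖a ν‖ * (B * ‖f‖ * ‖M ν f‖) := Summable.tsum_le_of_sum_le hsn hb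
      rcases eq_or_lt_of_le (norm_nonneg (M ν f)) with h0 | h0
      · rw [← h0]
        exact mul_nonneg (mul_nonneg hB0 (norm_nonneg _)) (norm_nonneg _)
      · have h7 : ‖M ν f‖ * ‖M ν f‖ ≤ (B * ‖a ν‖ * ‖f‖) * ‖M ν f‖ := by nlinarith
        exact le_of_mul_le_mul_right h7 h0
    · rw [hM ν f, tsum_eq_zero_of_not_summable hsm, norm_zero]
      exact mul_nonneg (mul_nonneg hB0 (norm_nonneg _)) (norm_nonneg _)
  -- norm bound for the composition
  have hUM : ∀ ν : Idx d, ‖(U (latt A ν)).comp (M ν)‖ ≤ B * ‖a ν‖ := by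
    intro ν
    refine ContinuousLinearMap.opNorm_le_bound _ (mul_nonneg hB0 (norm_nonneg _)) fun f => ?_
    calc ‖(U (latt A ν)).comp (M ν) f‖ = ‖U (latt A ν) (M ν f)‖ := rfl
      _ ≤ ‖M ν f‖ := hU1 _ _
      _ ≤ B * ‖a ν‖ * ‖f‖ := hMnorm ν f
  -- the weight is at least 1
  have hv1 : ∀ z, 1 ≤ v z := by
    intro z
    have h0 : 1 ≤ v 0 := by
      have h := hv_submul 0 0
      rw [add_zero] at h
      exact (le_mul_iff_one_le_left (hv_pos 0)).mp h
    have h1 : v 0 ≤ v z * v z := by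
      have h := hv_submul z (-z)
      rw [add_neg_cancel, hv_even] at h
      exact h
    nlinarith [hv_pos z]
  -- summable bound
  have hbound : ∀ ν : Idx d, ‖(U (latt A ν)).comp (M ν)‖ ≤ B * (‖a ν‖ * v (latt A ν)) := by
    intro ν
    refine (hUM ν).trans (mul_le_mul_of_nonneg_left ?_ hB0)
    exact le_mul_of_one_le_right (norm_nonneg _) (hv1 _)
  have hsumnorm : Summable (fun ν : Idx d => ‖(U (latt A ν)).comp (M ν)‖) :=
    Summable.of_nonneg_of_le (fun ν => norm_nonneg _) hbound (hsum.mul_left B)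
  refine ⟨hsumnorm, ?_⟩
  intro N hN
  set s : Set (Idx d) := {k | pnorm (latt A k) ≤ N} with hsdef
  have hcompS : Summable (fun ν : Idx d => (U (latt A ν)).comp (M ν)) := hsumnorm.of_norm
  have hsub1 : Summable ((fun ν : Idx d => (U (latt A ν)).comp (M ν)) ∘ ((↑) : s → Idx d)) :=
    hcompS.subtype s
  have hsub2 : Summable ((fun ν : Idx d => (U (latt A ν)).comp (M ν)) ∘ ((↑) : ↑sᶜ → Idx d)) :=
    hcompS.subtype _
  have hsplit := Summable.tsum_add_tsum_compl (s := s) hsub1 hsub2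
  have hkey : (∑' ν : Idx d, (U (latt A ν)).comp (M ν)) -
      (∑' ν : {k : Idx d // pnorm (latt A k) ≤ N}, (U (latt A ν.1)).comp (M ν.1))
      = ∑' ν : ↥sᶜ, (U (latt A ν.1)).comp (M ν.1) := by
    rw [← hsplit]
    exact add_sub_cancel_left _ _
  have hre : (∑' ν : ↥sᶜ, (U (latt A ν.1)).comp (M ν.1))
      = ∑' ν : {k : Idx d // N < pnorm (latt A k)}, (U (latt A ν.1)).comp (M ν.1) := by
    refine ((Equiv.subtypeEquivRight fun k => ?_).tsum_eq
      (fun ν : ↥sᶜ => (U (latt A ν.1)).comp (M ν.1))).symm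
    exact not_le.symm
  rw [hkey, hre]
  rcases isEmpty_or_nonempty {k : Idx d // N < pnorm (latt A k)} with hemp | hne
  · rw [tsum_empty, Real.iSup_of_isEmpty, mul_zero, norm_zero]
  · have hbdd : BddAbove (Set.range fun ν : {k : Idx d // N < pnorm (latt A k)} =>
        (v (latt A ν.1))⁻¹) := by
      refine ⟨1, ?_⟩
      rintro r ⟨ν, rfl⟩
      exact inv_le_one_of_one_le₀ (hv1 _)
    have hCle : ∀ ν : {k : Idx d // N < pnorm (latt A k)},
        (v (latt A ν.1))⁻¹ ≤ ⨆ ν : {k : Idx d // N < pnorm (latt A k)}, (v (latt A ν.1))⁻¹ :=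
      fun ν => le_ciSup hbdd ν
    have hC0 : 0 ≤ ⨆ ν : {k : Idx d // N < pnorm (latt A k)}, (v (latt A ν.1))⁻¹ :=
      le_trans (inv_nonneg.mpr (hv_pos _).le) (hCle (Classical.arbitrary _))
    have hterm : ∀ ν : {k : Idx d // N < pnorm (latt A k)},
        ‖(U (latt A ν.1)).comp (M ν.1)‖ ≤ (B * (‖a ν.1‖ * v (latt A ν.1))) *
          ⨆ ν : {k : Idx d // N < pnorm (latt A k)}, (v (latt A ν.1))⁻¹ := by
      intro ν
      calc ‖(U (latt A ν.1)).comp (M ν.1)‖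
          = ‖(U (latt A ν.1)).comp (M ν.1)‖ * (v (latt A ν.1) * (v (latt A ν.1))⁻¹) := by
            rw [mul_inv_cancel₀ (hv_pos _).ne', mul_one]
        _ = (‖(U (latt A ν.1)).comp (M ν.1)‖ * v (latt A ν.1)) * (v (latt A ν.1))⁻¹ := by ring
        _ ≤ (B * (‖a ν.1‖ * v (latt A ν.1))) * (v (latt A ν.1))⁻¹ := by
            refine mul_le_mul_of_nonneg_right ?_ (inv_nonneg.mpr (hv_pos _).le)
            calc ‖(U (latt A ν.1)).comp (M ν.1)‖ * v (latt A ν.1)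
                ≤ (B * ‖a ν.1‖) * v (latt A ν.1) :=
                  mul_le_mul_of_nonneg_right (hUM _) (hv_pos _).le
              _ = B * (‖a ν.1‖ * v (latt A ν.1)) := by ring
        _ ≤ (B * (‖a ν.1‖ * v (latt A ν.1))) *
              ⨆ ν : {k : Idx d // N < pnorm (latt A k)}, (v (latt A ν.1))⁻¹ := by
            refine mul_le_mul_of_nonneg_left (hCle ν) ?_
            exact mul_nonneg hB0 (mul_nonneg (norm_nonneg _) (hv_pos _).le)
    have hsubnorm : Summable (fun ν : {k : Idx d // N < pnorm (latt A k)} =>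
        ‖(U (latt A ν.1)).comp (M ν.1)‖) :=
      hsumnorm.subtype _
    have hsubBav : Summable (fun ν : {k : Idx d // N < pnorm (latt A k)} =>
        (B * (‖a ν.1‖ * v (latt A ν.1))) *
          ⨆ ν : {k : Idx d // N < pnorm (latt A k)}, (v (latt A ν.1))⁻¹) :=
      ((hsum.mul_left B).mul_right _).subtype _
    calc ‖∑' ν : {k : Idx d // N < pnorm (latt A k)}, (U (latt A ν.1)).comp (M ν.1)‖
        ≤ ∑' ν : {k : Idx d // N < pnorm (latt A k)}, ‖(U (latt A ν.1)).comp (M ν.1)‖ :=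
          norm_tsum_le_tsum_norm hsubnorm
      _ ≤ ∑' ν : {k : Idx d // N < pnorm (latt A k)}, (B * (‖a ν.1‖ * v (latt A ν.1))) *
            ⨆ ν : {k : Idx d // N < pnorm (latt A k)}, (v (latt A ν.1))⁻¹ :=
          Summable.tsum_le_tsum hterm hsubnorm hsubBav
      _ = (∑' ν : {k : Idx d // N < pnorm (latt A k)}, B * (‖a ν.1‖ * v (latt A ν.1))) *
            ⨆ ν : {k : Idx d // N < pnorm (latt A k)}, (v (latt A ν.1))⁻¹ :=
          tsum_mul_right
      _ = (B * ∑' ν : {k : Idx d // N < pnorm (latt A k)}, ‖a ν.1‖ * v (latt A ν.1)) *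
            ⨆ ν : {k : Idx d // N < pnorm (latt A k)}, (v (latt A ν.1))⁻¹ := by
          rw [tsum_mul_left]
      _ ≤ (B * ∑' ν : Idx d, ‖a ν‖ * v (latt A ν)) *
            ⨆ ν : {k : Idx d // N < pnorm (latt A k)}, (v (latt A ν.1))⁻¹ := by
          refine mul_le_mul_of_nonneg_right (mul_le_mul_of_nonneg_left ?_ hB0) hC0
          exact Summable.tsum_subtype_le (fun ν : Idx d => ‖a ν‖ * v (latt A ν)) _
            (fun ν => mul_nonneg (norm_nonneg _) (hv_pos _).le) hsum
      _ ≤ B * K * ⨆ ν : {k : Idx d // N < pnorm (latt A k)}, (v (latt A ν.1))⁻¹ :=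
          mul_le_mul_of_nonneg_right (mul_le_mul_of_nonneg_left hK hB0) hC0
end
end

section
/- Let g ∈ L²(ℝᵈ), g ≠ 0, and let Λ = Aℤ^{2d} be a lattice such that the Gabor system 𝒢(g,Λ) is a Parseval frame for L²(ℝᵈ). Let T be a bounded linear operator on L²(ℝᵈ) and suppose there exists h ∈ ℓ¹(Λ), h ≥ 0, such that |⟨T(π(μ)g), π(λ)g⟩| ≤ h(λ−μ) for all λ, μ ∈ Λ. Define a_ν(μ) = ⟨T(π(μ)g), π(μ+ν)g⟩ e^{2πi ν₁·μ₂} for ν, μ ∈ Λ (with ν = (ν₁,ν₂), μ = (μ₁,μ₂)). Then each a_ν is a bounded sequence with ‖a_ν‖_∞ ≤ h(ν), the series Σ_{ν∈Λ} π(ν) M_{a_ν} converges absolutely in the operator norm on L²(ℝᵈ), and its sum equals T. -/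
open MeasureTheory Complex Filter
open scoped InnerProductSpace ENNReal

noncomputable section

/-- The Gabor system `{π(λ)g : λ ∈ Aℤ^{2d}}` is a Parseval frame for `L²(ℝᵈ)`:
`Σ_λ |⟨f, π(λ)g⟩|² = ‖f‖²` for all `f ∈ L²`. -/
def ParsevalFrame {d : ℕ} (U : Ed d × Ed d → (Ltwo d →L[ℂ] Ltwo d)) (g : Ltwo d)
    (A : Matrix (Fin (d + d)) (Fin (d + d)) ℝ) : Prop :=
  ∀ f : Ltwo d,
    HasSum (fun k : Idx d => ‖(⟪U (latt A k) g, f⟫_ℂ : ℂ)‖ ^ 2) (‖f‖ ^ 2)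

/-! ### Auxiliary lemmas -/

lemma phase_norm (r : ℝ) : ‖Complex.exp (2 * Real.pi * Complex.I * (r:ℂ))‖ = 1 := by
  rw [Complex.norm_exp]; simp [mul_comm, mul_assoc, mul_left_comm]

lemma tfs_norm {d : ℕ} {U : Ed d × Ed d → (Ltwo d →L[ℂ] Ltwo d)} (hU : IsTFS U)
    (z : Ed d × Ed d) (f : Ltwo d) : ‖U z f‖ = ‖f‖ := by
  rw [Lp.norm_def, Lp.norm_def, eLpNorm_congr_ae (hU z f)]
  have hmp : MeasurePreserving (fun t : Ed d => t - z.1) volume volume :=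
    measurePreserving_sub_right volume z.1
  have h1 : eLpNorm (fun t : Ed d =>
      Complex.exp (2 * Real.pi * Complex.I * (⟪z.2, t⟫_ℝ : ℂ)) * f (t - z.1)) 2 volume
      = eLpNorm ((f : Ed d → ℂ) ∘ (fun t => t - z.1)) 2 volume := by
    apply eLpNorm_congr_norm_ae
    filter_upwards with t
    rw [norm_mul, phase_norm, one_mul]; rfl
  rw [h1, eLpNorm_comp_measurePreserving (Lp.aestronglyMeasurable f) hmp]

lemma tfs_comp {d : ℕ} {U : Ed d × Ed d → (Ltwo d →L[ℂ] Ltwo d)} (hU : IsTFS U)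
    (z w : Ed d × Ed d) (f : Ltwo d) :
    U z (U w f) = Complex.exp (-(2 * Real.pi * Complex.I * (⟪w.2, z.1⟫_ℝ : ℂ))) • U (z + w) f := by
  apply Lp.ext
  have hmp : MeasurePreserving (fun t : Ed d => t - z.1) volume volume :=
    measurePreserving_sub_right volume z.1
  have h2 := hmp.quasiMeasurePreserving.ae_eq_comp (hU w f)
  have h3 := Lp.coeFn_smul (Complex.exp (-(2 * Real.pi * Complex.I * (⟪w.2, z.1⟫_ℝ : ℂ))))
    (U (z + w) f)
  filter_upwards [hU z (U w f), h2, hU (z + w) f, h3] with t ht1 ht2 ht3 ht4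
  rw [ht1, ht4]
  simp only [Function.comp_apply] at ht2
  rw [ht2, Pi.smul_apply, smul_eq_mul, ht3]
  have e1 : ⟪w.2, t - z.1⟫_ℝ = ⟪w.2, t⟫_ℝ - ⟪w.2, z.1⟫_ℝ := inner_sub_right _ _ _
  have e2 : ⟪(z+w).2, t⟫_ℝ = ⟪z.2, t⟫_ℝ + ⟪w.2, t⟫_ℝ := by
    rw [Prod.snd_add]; exact inner_add_left _ _ _
  have e3 : t - z.1 - w.1 = t - (z + w).1 := by rw [Prod.fst_add, sub_sub]
  rw [e1, e2, e3, ← mul_assoc, ← mul_assoc, ← Complex.exp_add, ← Complex.exp_add]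
  congr 2
  push_cast
  ring

lemma latt_add {d : ℕ} (A : Matrix (Fin (d+d)) (Fin (d+d)) ℝ) (k l : Idx d) :
    latt A (k + l) = latt A k + latt A l := by
  have hv : (fun j => (((k + l) j : ℤ) : ℝ)) = (fun j => ((k j : ℤ) : ℝ)) + fun j => ((l j : ℤ) : ℝ) := by
    funext j; simp only [Pi.add_apply]; push_cast; ring
  unfold latt
  rw [hv, Matrix.mulVec_add]
  rfl

lemma scalar_polar (u v : ℂ) : (starRingEnd ℂ) u * v =
    (((‖u + v‖^2 : ℝ) : ℂ) - ((‖u - v‖^2 : ℝ) : ℂ) +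
      (((‖u - Complex.I * v‖^2 : ℝ) : ℂ) - ((‖u + Complex.I * v‖^2 : ℝ) : ℂ)) * Complex.I) / 4 := by
  have cast : ∀ x : ℂ, ((‖x‖^2 : ℝ) : ℂ) = x * (starRingEnd ℂ) x := by
    intro x; rw [Complex.mul_conj']; push_cast; ring
  rw [cast, cast, cast, cast]
  simp only [map_add, map_sub, map_mul, Complex.conj_I]
  linear_combination (-(1/2 : ℂ) * (u * (starRingEnd ℂ) v - v * (starRingEnd ℂ) u)) * Complex.I_sq

variable {d : ℕ} {U : Ed d × Ed d → (Ltwo d →L[ℂ] Ltwo d)} {g : Ltwo d}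
  {A : Matrix (Fin (d + d)) (Fin (d + d)) ℝ}

lemma par_polar (hPar : ParsevalFrame U g A) (f f' : Ltwo d) :
    HasSum (fun k : Idx d =>
      (starRingEnd ℂ) ⟪U (latt A k) g, f⟫_ℂ * ⟪U (latt A k) g, f'⟫_ℂ) ⟪f, f'⟫_ℂ := by
  set u : Ltwo d → Idx d → ℂ := fun w k => ⟪U (latt A k) g, w⟫_ℂ with hu
  have hs : ∀ w : Ltwo d, HasSum (fun k => ((‖u w k‖^2 : ℝ) : ℂ)) ((‖w‖^2 : ℝ) : ℂ) :=
    fun w => (hPar w).mapL Complex.ofRealCLM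
  have comb := ((((hs (f+f')).sub (hs (f-f'))).add
    (((hs (f - Complex.I • f')).sub (hs (f + Complex.I • f'))).mul_right Complex.I)).div_const 4)
  have hval : ⟪f, f'⟫_ℂ = (((‖f + f'‖^2 : ℝ) : ℂ) - ((‖f - f'‖^2 : ℝ) : ℂ) +
      (((‖f - Complex.I • f'‖^2 : ℝ) : ℂ) - ((‖f + Complex.I • f'‖^2 : ℝ) : ℂ)) * Complex.I) / 4 := by
    have hI : (RCLike.I : ℂ) = Complex.I := rfl
    have := inner_eq_sum_norm_sq_div_four (𝕜 := ℂ) f f'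
    rw [hI] at this
    push_cast at this ⊢
    exact this
  rw [hval]
  refine comb.congr_fun (fun k => ?_)
  have ha : u (f + f') k = u f k + u f' k := inner_add_right _ _ _
  have hb : u (f - f') k = u f k - u f' k := inner_sub_right _ _ _
  have hc : u (f - Complex.I • f') k = u f k - Complex.I * u f' k := by
    rw [hu]; simp only [inner_sub_right, inner_smul_right]
  have hd : u (f + Complex.I • f') k = u f k + Complex.I * u f' k := by
    rw [hu]; simp only [inner_add_right, inner_smul_right]
  rw [scalar_polar (u f k) (u f' k), ha, hb, hc, hd]

lemma fin_synth_bound (hPar : ParsevalFrame U g A) (c : Idx d → ℂ) (t : Finset (Idx d)) :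
    ‖∑ k ∈ t, c k • U (latt A k) g‖ ≤ Real.sqrt (∑ k ∈ t, ‖c k‖^2) := by
  set e : Idx d → Ltwo d := fun k => U (latt A k) g with he
  set S := ∑ k ∈ t, c k • e k with hS
  have key : ‖S‖^2 ≤ ∑ k ∈ t, ‖c k‖^2 := by
    by_cases h0 : S = 0
    · rw [h0, norm_zero]
      simpa using Finset.sum_nonneg fun (k : Idx d) (_ : k ∈ t) => sq_nonneg ‖c k‖
    have h1 : (⟪S, S⟫_ℂ : ℂ) = ∑ k ∈ t, c k * ⟪S, e k⟫_ℂ := by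
      rw [hS]
      conv_lhs => rw [inner_sum]
      exact Finset.sum_congr rfl fun k _ => inner_smul_right _ _ _
    have h2 : ‖S‖^2 ≤ ∑ k ∈ t, ‖c k‖ * ‖(⟪S, e k⟫_ℂ : ℂ)‖ := by
      calc ‖S‖^2 = ‖(⟪S, S⟫_ℂ : ℂ)‖ := by
            rw [inner_self_eq_norm_sq_to_K]; rw [norm_pow]; simp
        _ ≤ ∑ k ∈ t, ‖c k * ⟪S, e k⟫_ℂ‖ := h1 ▸ norm_sum_le _ _
        _ = ∑ k ∈ t, ‖c k‖ * ‖(⟪S, e k⟫_ℂ : ℂ)‖ := by simp [norm_mul]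
    have h3 : ∑ k ∈ t, ‖(⟪S, e k⟫_ℂ : ℂ)‖^2 ≤ ‖S‖^2 := by
      have heq : ∀ k : Idx d, ‖(⟪S, e k⟫_ℂ : ℂ)‖^2 = ‖(⟪e k, S⟫_ℂ : ℂ)‖^2 := by
        intro k; rw [norm_inner_symm]
      calc ∑ k ∈ t, ‖(⟪S, e k⟫_ℂ : ℂ)‖^2 = ∑ k ∈ t, ‖(⟪e k, S⟫_ℂ : ℂ)‖^2 :=
            Finset.sum_congr rfl fun k _ => heq k
        _ ≤ ‖S‖^2 := sum_le_hasSum t (fun k _ => by positivity) (hPar S)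
    have h4 : (∑ k ∈ t, ‖c k‖ * ‖(⟪S, e k⟫_ℂ : ℂ)‖)^2 ≤
        (∑ k ∈ t, ‖c k‖^2) * ∑ k ∈ t, ‖(⟪S, e k⟫_ℂ : ℂ)‖^2 :=
      Finset.sum_mul_sq_le_sq_mul_sq t _ _
    have hSpos : 0 < ‖S‖^2 := by
      have := norm_pos_iff.mpr h0; positivity
    nlinarith [sq_nonneg (∑ k ∈ t, ‖c k‖ * ‖(⟪S, e k⟫_ℂ : ℂ)‖), h2, h3, h4,
      Finset.sum_nonneg (fun k (_ : k ∈ t) => sq_nonneg ‖c k‖)]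
  have := Real.sqrt_le_sqrt key
  rwa [Real.sqrt_sq (norm_nonneg S)] at this

lemma synth_summable (hPar : ParsevalFrame U g A) (c : Idx d → ℂ)
    (hc : Summable fun k => ‖c k‖^2) :
    Summable (fun k : Idx d => c k • U (latt A k) g) := by
  rw [summable_iff_vanishing]
  intro s hs
  obtain ⟨ε, εpos, hball⟩ := Metric.mem_nhds_iff.mp hs
  obtain ⟨u, hu⟩ := (summable_iff_vanishing.mp hc) (Metric.ball 0 (ε^2))
    (Metric.ball_mem_nhds _ (by positivity))
  refine ⟨u, fun t ht => hball ?_⟩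
  have h1 : ∑ b ∈ t, ‖c b‖^2 < ε^2 := by
    have := hu t ht
    rw [Metric.mem_ball, Real.dist_eq, sub_zero] at this
    exact lt_of_abs_lt this
  rw [Metric.mem_ball, dist_zero_right]
  calc ‖∑ k ∈ t, c k • U (latt A k) g‖ ≤ Real.sqrt (∑ k ∈ t, ‖c k‖^2) :=
        fin_synth_bound hPar c t
    _ < Real.sqrt (ε^2) := Real.sqrt_lt_sqrt (Finset.sum_nonneg fun k _ => sq_nonneg _) h1
    _ = ε := Real.sqrt_sq εpos.le

lemma synth_norm_le (hPar : ParsevalFrame U g A) (c : Idx d → ℂ)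
    (hc : Summable fun k => ‖c k‖^2) :
    ‖∑' k : Idx d, c k • U (latt A k) g‖ ≤ Real.sqrt (∑' k, ‖c k‖^2) := by
  have hsum := (synth_summable hPar c hc).hasSum
  have hnorm : Filter.Tendsto (fun t : Finset (Idx d) => ‖∑ k ∈ t, c k • U (latt A k) g‖)
      Filter.atTop (nhds ‖∑' k : Idx d, c k • U (latt A k) g‖) := hsum.norm
  refine le_of_tendsto hnorm (Filter.Eventually.of_forall fun t => ?_)
  calc ‖∑ k ∈ t, c k • U (latt A k) g‖ ≤ Real.sqrt (∑ k ∈ t, ‖c k‖^2) :=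
        fin_synth_bound hPar c t
    _ ≤ Real.sqrt (∑' k, ‖c k‖^2) :=
        Real.sqrt_le_sqrt (Summable.sum_le_tsum t (fun k _ => sq_nonneg _) hc)

lemma par_recon (hPar : ParsevalFrame U g A) (f : Ltwo d) :
    HasSum (fun k : Idx d => (⟪U (latt A k) g, f⟫_ℂ : ℂ) • U (latt A k) g) f := by
  set e : Idx d → Ltwo d := fun k => U (latt A k) g with he
  have hc : Summable fun k => ‖(⟪e k, f⟫_ℂ : ℂ)‖^2 := (hPar f).summable
  have hsummable := synth_summable hPar (fun k => ⟪e k, f⟫_ℂ) hc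
  suffices hS : (∑' k, (⟪e k, f⟫_ℂ : ℂ) • e k) = f by
    have := hsummable.hasSum
    rwa [hS] at this
  apply ext_inner_left ℂ
  intro v
  have h1 : HasSum (fun k => (⟪v, (⟪e k, f⟫_ℂ : ℂ) • e k⟫_ℂ : ℂ))
      (⟪v, ∑' k, (⟪e k, f⟫_ℂ : ℂ) • e k⟫_ℂ : ℂ) := hsummable.hasSum.mapL (innerSL ℂ v)
  have h2 : (fun k => (⟪v, (⟪e k, f⟫_ℂ : ℂ) • e k⟫_ℂ : ℂ)) =
      fun k => (starRingEnd ℂ) ⟪e k, v⟫_ℂ * ⟪e k, f⟫_ℂ := by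
    funext k
    rw [inner_smul_right, ← inner_conj_symm v (e k)]
    ring
  rw [h2] at h1
  exact h1.unique (par_polar hPar v f)

lemma tsum_cs {ι : Type*} (x y : ι → ℝ) (hx0 : ∀ i, 0 ≤ x i) (hy0 : ∀ i, 0 ≤ y i)
    (hx : Summable fun i => (x i)^2) (hy : Summable fun i => (y i)^2) :
    Summable (fun i => x i * y i) ∧
    ∑' i, x i * y i ≤ Real.sqrt (∑' i, (x i)^2) * Real.sqrt (∑' i, (y i)^2) := by
  have hs : Summable (fun i => x i * y i) := by
    refine Summable.of_nonneg_of_le (fun i => mul_nonneg (hx0 i) (hy0 i)) (fun i => ?_)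
      ((hx.add hy).mul_left (1/2))
    nlinarith [sq_nonneg (x i - y i)]
  refine ⟨hs, Summable.tsum_le_of_sum_le hs fun s => ?_⟩
  set s1 := Real.sqrt (∑' i, (x i)^2) with hs1
  set s2 := Real.sqrt (∑' i, (y i)^2) with hs2
  have h1 : ∑ i ∈ s, (x i)^2 ≤ s1^2 := by
    rw [hs1, Real.sq_sqrt (tsum_nonneg fun i => sq_nonneg _)]
    exact Summable.sum_le_tsum s (fun i _ => sq_nonneg _) hx
  have h2 : ∑ i ∈ s, (y i)^2 ≤ s2^2 := by
    rw [hs2, Real.sq_sqrt (tsum_nonneg fun i => sq_nonneg _)]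
    exact Summable.sum_le_tsum s (fun i _ => sq_nonneg _) hy
  have h3 := Finset.sum_mul_sq_le_sq_mul_sq s x y
  have h4 : 0 ≤ ∑ i ∈ s, x i * y i :=
    Finset.sum_nonneg fun i _ => mul_nonneg (hx0 i) (hy0 i)
  have h5 : (0:ℝ) ≤ s1 := Real.sqrt_nonneg _
  have h6 : (0:ℝ) ≤ s2 := Real.sqrt_nonneg _
  have h7 : (0:ℝ) ≤ ∑ i ∈ s, (x i)^2 := Finset.sum_nonneg fun i _ => sq_nonneg _
  have h8 : (0:ℝ) ≤ ∑ i ∈ s, (y i)^2 := Finset.sum_nonneg fun i _ => sq_nonneg _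
  have h9 : (∑ i ∈ s, (x i)^2) * ∑ i ∈ s, (y i)^2 ≤ s1^2 * s2^2 :=
    mul_le_mul h1 h2 h8 (sq_nonneg s1)
  nlinarith [h3, h9, h4, mul_nonneg h5 h6]

set_option maxHeartbeats 2000000 in
/-- Parseval Gabor frame `𝒢(g, Aℤ^{2d})`, `T` bounded on `L²` with
matrix dominated by `h ∈ ℓ¹`: the symbols
`a_ν(μ) = ⟨T(π(μ)g), π(μ+ν)g⟩ e^{2πi ν₁·μ₂}` satisfy `‖a_ν‖_∞ ≤ h(ν)`, the series
`Σ_ν π(ν) M_{a_ν}` converges absolutely in operator norm, and its sum equals `T`. -/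
theorem statement5 (d : ℕ) (A : Matrix (Fin (d + d)) (Fin (d + d)) ℝ) (hA : IsUnit A.det)
    (g : Ltwo d) (hg : g ≠ 0) (U : Ed d × Ed d → (Ltwo d →L[ℂ] Ltwo d)) (hU : IsTFS U)
    (hPar : ParsevalFrame U g A)
    (T : Ltwo d →L[ℂ] Ltwo d)
    (h : Idx d → ℝ) (hh0 : ∀ k, 0 ≤ h k) (hh : Summable h)
    (hdom : ∀ l m : Idx d,
      ‖(⟪U (latt A l) g, T (U (latt A m) g)⟫_ℂ : ℂ)‖ ≤ h (l - m))
    (a : Idx d → Idx d → ℂ)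
    (hadef : ∀ ν μ : Idx d,
      a ν μ = (⟪U (latt A (μ + ν)) g, T (U (latt A μ) g)⟫_ℂ : ℂ) *
        Complex.exp (2 * Real.pi * Complex.I * (⟪(latt A ν).1, (latt A μ).2⟫_ℝ : ℂ)))
    (M : Idx d → (Ltwo d →L[ℂ] Ltwo d))
    (hM : ∀ ν : Idx d, IsGM U g A (a ν) (M ν)) :
    (∀ ν μ : Idx d, ‖a ν μ‖ ≤ h ν) ∧
    Summable (fun ν : Idx d => ‖(U (latt A ν)).comp (M ν)‖) ∧
    (∑' ν : Idx d, (U (latt A ν)).comp (M ν)) = T := by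
  classical
  -- Part 1 : bound on the symbols
  have hbound : ∀ ν μ : Idx d, ‖a ν μ‖ ≤ h ν := by
    intro ν μ
    rw [hadef ν μ, norm_mul, phase_norm, mul_one]
    have h1 := hdom (μ + ν) μ
    rwa [add_sub_cancel_left] at h1
  -- square-summability of the Gabor multiplier coefficients
  have hsq : ∀ (ν : Idx d) (f : Ltwo d),
      Summable fun μ => ‖a ν μ * ⟪U (latt A μ) g, f⟫_ℂ‖^2 := by
    intro ν f
    refine Summable.of_nonneg_of_le (fun μ => sq_nonneg _) (fun μ => ?_)
      (((hPar f).summable).mul_left ((h ν)^2))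
    rw [norm_mul, mul_pow]
    have h2 : ‖a ν μ‖^2 ≤ (h ν)^2 := by nlinarith [norm_nonneg (a ν μ), hbound ν μ, hh0 ν]
    exact mul_le_mul_of_nonneg_right h2 (sq_nonneg _)
  have hMf : ∀ (ν : Idx d) (f : Ltwo d),
      HasSum (fun μ => (a ν μ * ⟪U (latt A μ) g, f⟫_ℂ) • U (latt A μ) g) (M ν f) := by
    intro ν f
    have := (synth_summable hPar (fun μ => a ν μ * ⟪U (latt A μ) g, f⟫_ℂ) (hsq ν f)).hasSum
    rwa [← hM ν f] at this
  -- norm bound on M ν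
  have hMnorm : ∀ ν : Idx d, ‖M ν‖ ≤ h ν := by
    intro ν
    refine ContinuousLinearMap.opNorm_le_bound _ (hh0 ν) (fun f => ?_)
    rw [hM ν f]
    refine (synth_norm_le hPar (fun μ => a ν μ * ⟪U (latt A μ) g, f⟫_ℂ) (hsq ν f)).trans ?_
    have h1 : ∑' μ, ‖a ν μ * ⟪U (latt A μ) g, f⟫_ℂ‖^2
        ≤ (h ν)^2 * ∑' μ, ‖(⟪U (latt A μ) g, f⟫_ℂ : ℂ)‖^2 := by
      rw [← tsum_mul_left]
      refine Summable.tsum_le_tsum (fun μ => ?_) (hsq ν f) (((hPar f).summable).mul_left _)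
      rw [norm_mul, mul_pow]
      exact mul_le_mul_of_nonneg_right
        (by nlinarith [norm_nonneg (a ν μ), hbound ν μ, hh0 ν]) (sq_nonneg _)
    calc Real.sqrt (∑' μ, ‖a ν μ * ⟪U (latt A μ) g, f⟫_ℂ‖^2)
        ≤ Real.sqrt ((h ν)^2 * ∑' μ, ‖(⟪U (latt A μ) g, f⟫_ℂ : ℂ)‖^2) := Real.sqrt_le_sqrt h1
      _ = h ν * ‖f‖ := by
          rw [(hPar f).tsum_eq, Real.sqrt_mul (sq_nonneg _), Real.sqrt_sq (hh0 ν),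
            Real.sqrt_sq (norm_nonneg f)]
  have hopb : ∀ ν : Idx d, ‖(U (latt A ν)).comp (M ν)‖ ≤ h ν := by
    intro ν
    refine ContinuousLinearMap.opNorm_le_bound _ (hh0 ν) (fun f => ?_)
    rw [ContinuousLinearMap.comp_apply, tfs_norm hU]
    exact ((M ν).le_opNorm f).trans (mul_le_mul_of_nonneg_right (hMnorm ν) (norm_nonneg f))
  have hSummNorm : Summable (fun ν : Idx d => ‖(U (latt A ν)).comp (M ν)‖) :=
    Summable.of_nonneg_of_le (fun _ => norm_nonneg _) hopb hh
  have hopS : Summable (fun ν : Idx d => (U (latt A ν)).comp (M ν)) :=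
    Summable.of_norm_bounded hh hopb
  refine ⟨hbound, hSummNorm, ?_⟩
  -- Part 3 : the sum of the series is T
  refine ContinuousLinearMap.ext fun f => ?_
  apply ext_inner_left ℂ
  intro v
  set c : Idx d → ℂ := fun μ => ⟪U (latt A μ) g, f⟫_ℂ with hcdef
  set dv : Idx d → ℂ := fun l => ⟪U (latt A l) g, v⟫_ℂ with hdvdef
  set b : Idx d → Idx d → ℂ := fun μ ν => ⟪U (latt A (μ + ν)) g, T (U (latt A μ) g)⟫_ℂ with hbdef
  have hbnorm : ∀ μ ν : Idx d, ‖b μ ν‖ ≤ h ν := by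
    intro μ ν
    have := hdom (μ + ν) μ
    rwa [add_sub_cancel_left] at this
  have hc2 : Summable fun μ => ‖c μ‖^2 := (hPar f).summable
  have hdv2 : Summable fun l => ‖dv l‖^2 := (hPar v).summable
  have hshift : ∀ ν : Idx d, Summable fun μ => ‖dv (μ + ν)‖^2 := by
    intro ν
    have := (Equiv.addRight ν).summable_iff.mpr hdv2
    exact this.congr fun μ => by simp [Function.comp]
  -- U ν (M ν f) as a series
  have hUM : ∀ ν : Idx d, HasSum (fun μ => (b μ ν * c μ) • U (latt A (μ + ν)) g)
      (U (latt A ν) (M ν f)) := by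
    intro ν
    have h1 := (hMf ν f).mapL (U (latt A ν))
    refine h1.congr_fun fun μ => ?_
    rw [ContinuousLinearMap.map_smul]
    have h2 : U (latt A ν) (U (latt A μ) g)
        = Complex.exp (-(2 * Real.pi * Complex.I * (⟪(latt A μ).2, (latt A ν).1⟫_ℝ : ℂ)))
          • U (latt A (μ + ν)) g := by
      rw [tfs_comp hU (latt A ν) (latt A μ) g, add_comm (latt A ν) (latt A μ), ← latt_add]
    rw [h2, smul_smul]
    have h3 : a ν μ
        * Complex.exp (-(2 * Real.pi * Complex.I * (⟪(latt A μ).2, (latt A ν).1⟫_ℝ : ℂ)))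
        = b μ ν := by
      rw [hadef ν μ, real_inner_comm (latt A ν).1 (latt A μ).2, mul_assoc,
        ← Complex.exp_add, add_neg_cancel, Complex.exp_zero, mul_one]
    rw [show a ν μ * c μ * Complex.exp (-(2 * Real.pi * Complex.I
        * (⟪(latt A μ).2, (latt A ν).1⟫_ℝ : ℂ)))
      = (a ν μ * Complex.exp (-(2 * Real.pi * Complex.I
        * (⟪(latt A μ).2, (latt A ν).1⟫_ℝ : ℂ)))) * c μ by ring, h3]
  have hinner : ∀ ν : Idx d, HasSum (fun μ => b μ ν * c μ * ⟪v, U (latt A (μ + ν)) g⟫_ℂ)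
      (⟪v, U (latt A ν) (M ν f)⟫_ℂ : ℂ) := by
    intro ν
    have h1 := (hUM ν).mapL (innerSL ℂ v)
    refine h1.congr_fun fun μ => ?_
    rw [innerSL_apply_apply, inner_smul_right]
  -- the double series
  set F : Idx d × Idx d → ℂ :=
    fun p => b p.2 p.1 * c p.2 * ⟪v, U (latt A (p.2 + p.1)) g⟫_ℂ with hFdef
  have hFnorm : ∀ p : Idx d × Idx d, ‖F p‖ ≤ h p.1 * (‖c p.2‖ * ‖dv (p.2 + p.1)‖) := by
    intro p
    rw [hFdef]
    have hv : ‖(⟪v, U (latt A (p.2 + p.1)) g⟫_ℂ : ℂ)‖ = ‖dv (p.2 + p.1)‖ := by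
      rw [hdvdef]; exact norm_inner_symm v _
    rw [norm_mul, norm_mul, hv, mul_assoc]
    exact mul_le_mul_of_nonneg_right (hbnorm p.2 p.1)
      (mul_nonneg (norm_nonneg _) (norm_nonneg _))
  set Cst : ℝ := Real.sqrt (∑' μ, ‖c μ‖^2) * Real.sqrt (∑' l, ‖dv l‖^2) with hCst
  have hcs : ∀ ν : Idx d, Summable (fun μ => ‖c μ‖ * ‖dv (μ + ν)‖) ∧
      ∑' μ, ‖c μ‖ * ‖dv (μ + ν)‖ ≤ Cst := by
    intro ν
    obtain ⟨hsum, hle⟩ := tsum_cs (fun μ => ‖c μ‖) (fun μ => ‖dv (μ + ν)‖)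
      (fun μ => norm_nonneg _) (fun μ => norm_nonneg _) hc2 (hshift ν)
    refine ⟨hsum, hle.trans ?_⟩
    rw [hCst]
    have : ∑' μ, ‖dv (μ + ν)‖^2 = ∑' l, ‖dv l‖^2 := by
      have := (Equiv.addRight ν).tsum_eq (fun l => ‖dv l‖^2)
      simpa [Function.comp] using this
    rw [this]
  have hG : Summable (fun p : Idx d × Idx d => h p.1 * (‖c p.2‖ * ‖dv (p.2 + p.1)‖)) := by
    rw [summable_prod_of_nonneg
      (fun p => mul_nonneg (hh0 _) (mul_nonneg (norm_nonneg _) (norm_nonneg _)))]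
    constructor
    · intro ν; exact ((hcs ν).1.mul_left (h ν))
    · refine Summable.of_nonneg_of_le
        (fun ν => tsum_nonneg fun μ => mul_nonneg (hh0 _)
          (mul_nonneg (norm_nonneg _) (norm_nonneg _)))
        (fun ν => ?_) (hh.mul_right Cst)
      have hid : (fun μ : Idx d => h (ν, μ).1 * (‖c (ν, μ).2‖ * ‖dv ((ν, μ).2 + (ν, μ).1)‖))
          = fun μ : Idx d => h ν * (‖c μ‖ * ‖dv (μ + ν)‖) := rfl
      rw [hid, tsum_mul_left]
      exact mul_le_mul_of_nonneg_left (hcs ν).2 (hh0 ν)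
  have hF : Summable F := Summable.of_norm_bounded hG hFnorm
  -- evaluate the operator sum at f and pair with v
  have hXf : HasSum (fun ν : Idx d => (U (latt A ν)).comp (M ν) f)
      ((∑' ν : Idx d, (U (latt A ν)).comp (M ν)) f) :=
    hopS.hasSum.mapL (ContinuousLinearMap.apply ℂ (Ltwo d) f)
  have hvX : HasSum (fun ν : Idx d => (⟪v, U (latt A ν) (M ν f)⟫_ℂ : ℂ))
      (⟪v, (∑' ν : Idx d, (U (latt A ν)).comp (M ν)) f⟫_ℂ : ℂ) := by
    have h1 := hXf.mapL (innerSL ℂ v)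
    refine h1.congr_fun fun ν => rfl
  -- per-μ sum over ν
  have hTμ : ∀ μ : Idx d, HasSum (fun ν => F (ν, μ))
      (c μ * ⟪v, T (U (latt A μ) g)⟫_ℂ) := by
    intro μ
    have hp := par_polar hPar v (T (U (latt A μ) g))
    have hp2 : HasSum (fun ν : Idx d =>
        (starRingEnd ℂ) ⟪U (latt A (μ + ν)) g, v⟫_ℂ
          * ⟪U (latt A (μ + ν)) g, T (U (latt A μ) g)⟫_ℂ)
        (⟪v, T (U (latt A μ) g)⟫_ℂ : ℂ) := by
      have h1 := ((Equiv.addLeft μ).hasSum_iff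
        (f := fun l : Idx d => (starRingEnd ℂ) ⟪U (latt A l) g, v⟫_ℂ
          * ⟪U (latt A l) g, T (U (latt A μ) g)⟫_ℂ)).mpr hp
      refine h1.congr_fun fun ν => ?_
      simp [Equiv.coe_addLeft]
    have hp3 := hp2.mul_left (c μ)
    refine hp3.congr_fun fun ν => ?_
    rw [hFdef]
    have hvi : (⟪v, U (latt A (μ + ν)) g⟫_ℂ : ℂ)
        = (starRingEnd ℂ) ⟪U (latt A (μ + ν)) g, v⟫_ℂ := by
      rw [← inner_conj_symm v (U (latt A (μ + ν)) g)]
    rw [hbdef]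
    dsimp only
    rw [hvi]
    ring
  -- sum over μ gives ⟪v, T f⟫
  have hTf : HasSum (fun μ => c μ * ⟪v, T (U (latt A μ) g)⟫_ℂ) (⟪v, T f⟫_ℂ : ℂ) := by
    have h1 := ((par_recon hPar f).mapL T).mapL (innerSL ℂ v)
    refine h1.congr_fun fun μ => ?_
    rw [ContinuousLinearMap.map_smul, innerSL_apply_apply, inner_smul_right]
  -- put everything together
  have hswap : Summable (fun q : Idx d × Idx d => F (q.2, q.1)) := by
    have := ((Equiv.prodComm (Idx d) (Idx d)).summable_iff (f := F)).mpr hF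
    exact this.congr fun q => rfl
  calc (⟪v, (∑' ν : Idx d, (U (latt A ν)).comp (M ν)) f⟫_ℂ : ℂ)
      = ∑' ν : Idx d, ∑' μ : Idx d, F (ν, μ) := by
        rw [← hvX.tsum_eq]
        exact tsum_congr fun ν => ((hinner ν).tsum_eq).symm
    _ = ∑' p : Idx d × Idx d, F p := (Summable.tsum_prod' hF fun ν => (hinner ν).summable).symm
    _ = ∑' q : Idx d × Idx d, F (q.2, q.1) :=
        (((Equiv.prodComm (Idx d) (Idx d)).tsum_eq F).symm).trans (tsum_congr fun q => rfl)
    _ = ∑' μ : Idx d, ∑' ν : Idx d, F (ν, μ) :=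
        Summable.tsum_prod' hswap fun μ => (hTμ μ).summable
    _ = ∑' μ : Idx d, c μ * ⟪v, T (U (latt A μ) g)⟫_ℂ :=
        tsum_congr fun μ => (hTμ μ).tsum_eq
    _ = (⟪v, T f⟫_ℂ : ℂ) := hTf.tsum_eq
end
end

section
/- Let g ∈ 𝒮(ℝᵈ) and let Λ = Aℤ^{2d} be a lattice. If c : Λ → ℂ decays rapidly, i.e. for every s ≥ 0 there exists C_s with |c_μ| ≤ C_s (1+|μ|)^{−s} for all μ ∈ Λ, then the series Σ_{μ∈Λ} c_μ π(μ)g converges unconditionally in the topology of 𝒮(ℝᵈ), and its sum is a Schwartz function. -/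
open MeasureTheory Complex Filter
open scoped InnerProductSpace ENNReal

noncomputable section

/-- `P z` is the time-frequency shift `π(z)g` of the Schwartz window `g`, as a Schwartz
function: `(P (x, ξ))(t) = e^{2πi ξ·t} g(t - x)`. -/
def IsSchwartzTFS {d : ℕ} (g : SchwartzMap (Ed d) ℂ)
    (P : Ed d × Ed d → SchwartzMap (Ed d) ℂ) : Prop :=
  ∀ z : Ed d × Ed d, ∀ t : Ed d,
    P z t = Complex.exp (2 * Real.pi * Complex.I * (⟪z.2, t⟫_ℝ : ℂ)) * g (t - z.1)

namespace Stmt10Aux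

/-! ### Summability in the Schwartz space from summability of all seminorms -/

variable {E F : Type*} [NormedAddCommGroup E] [NormedSpace ℝ E]
  [NormedAddCommGroup F] [NormedSpace ℝ F] [CompleteSpace F] {ι : Type*}

variable (f : ι → SchwartzMap E F)

lemma ptwise_summable (hb : ∀ k n : ℕ, Summable (fun i => SchwartzMap.seminorm ℝ k n (f i)))
    (x : E) : Summable (fun i => f i x) := by
  refine Summable.of_norm_bounded (hb 0 0) (fun i => ?_)
  exact SchwartzMap.norm_le_seminorm ℝ (f i) x

lemma tsum_decay_bound (hb : ∀ k n : ℕ, Summable (fun i => SchwartzMap.seminorm ℝ k n (f i)))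
    (k n : ℕ) (x : E) :
    ‖x‖ ^ k * ‖iteratedFDeriv ℝ n (fun y => ∑' i, f i y) x‖ ≤
      ∑' i, SchwartzMap.seminorm ℝ k n (f i) := by
  have hsm : ∀ i, ContDiff ℝ ((⊤ : ℕ∞) : WithTop ℕ∞) (f i) := fun i => (f i).smooth'
  have hv : ∀ m : ℕ, ((m : ℕ∞) ≤ (⊤ : ℕ∞)) →
      Summable (fun i => SchwartzMap.seminorm ℝ 0 m (f i)) := fun m _ => hb 0 m
  have hbd : ∀ (m : ℕ) (i : ι) (y : E), ((m : ℕ∞) ≤ (⊤ : ℕ∞)) →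
      ‖iteratedFDeriv ℝ m (f i) y‖ ≤ SchwartzMap.seminorm ℝ 0 m (f i) :=
    fun m i y _ => SchwartzMap.norm_iteratedFDeriv_le_seminorm ℝ (f i) m y
  rw [iteratedFDeriv_tsum_apply hsm hv hbd le_top x]
  have hsn : Summable fun i => ‖iteratedFDeriv ℝ n (f i) x‖ :=
    Summable.of_nonneg_of_le (fun i => norm_nonneg _) (fun i => hbd n i x le_top) (hb 0 n)
  calc ‖x‖ ^ k * ‖∑' i, iteratedFDeriv ℝ n (f i) x‖
      ≤ ‖x‖ ^ k * ∑' i, ‖iteratedFDeriv ℝ n (f i) x‖ := by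
        gcongr; exacts [norm_tsum_le_tsum_norm hsn]
    _ = ∑' i, ‖x‖ ^ k * ‖iteratedFDeriv ℝ n (f i) x‖ := by rw [tsum_mul_left]
    _ ≤ ∑' i, SchwartzMap.seminorm ℝ k n (f i) := by
        refine Summable.tsum_le_tsum (fun i => SchwartzMap.le_seminorm ℝ k n (f i) x) ?_ (hb k n)
        exact Summable.of_nonneg_of_le (fun i => by positivity)
          (fun i => SchwartzMap.le_seminorm ℝ k n (f i) x) (hb k n)

/-- The sum of the family, as a Schwartz map. -/
def sumSchwartz (hb : ∀ k n : ℕ, Summable (fun i => SchwartzMap.seminorm ℝ k n (f i))) :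
    SchwartzMap E F where
  toFun := fun y => ∑' i, f i y
  smooth' := by
    refine contDiff_tsum (fun i => (f i).smooth') (fun m _ => hb 0 m) ?_
    exact fun m i y _ => SchwartzMap.norm_iteratedFDeriv_le_seminorm ℝ (f i) m y
  decay' := fun k n => ⟨∑' i, SchwartzMap.seminorm ℝ k n (f i),
    fun x => tsum_decay_bound f hb k n x⟩

lemma summable_schwartz (hb : ∀ k n : ℕ, Summable (fun i => SchwartzMap.seminorm ℝ k n (f i))) :
    Summable f := by
  classical
  refine ⟨sumSchwartz f hb, ?_⟩
  rw [HasSum]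
  rw [(schwartz_withSeminorms ℝ E F).tendsto_nhds]
  rintro ⟨k, n⟩ ε hε
  have htail := tendsto_tsum_compl_atTop_zero (fun i => SchwartzMap.seminorm ℝ k n (f i))
  have hev : ∀ᶠ s : Finset ι in atTop,
      (∑' i : {x // x ∉ s}, SchwartzMap.seminorm ℝ k n (f i)) < ε :=
    htail.eventually_lt_const hε
  filter_upwards [hev] with s hs
  have hp : schwartzSeminormFamily ℝ E F (k, n) = SchwartzMap.seminorm ℝ k n := rfl
  rw [hp]
  refine lt_of_le_of_lt ?_ hs
  have hb' : ∀ k' n' : ℕ,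
      Summable (fun i : {x // x ∉ s} => SchwartzMap.seminorm ℝ k' n' (f i)) := by
    intro k' n'
    exact ((hb k' n').subtype ((s : Set ι)ᶜ))
  have hcoe : ∀ x : E, ((∑ i ∈ s, f i) - sumSchwartz f hb) x
      = -(∑' i : {x // x ∉ s}, f i x) := by
    intro x
    have hsum : Summable (fun i => f i x) := ptwise_summable f hb x
    have hsplit := Summable.sum_add_tsum_compl (s := s) hsum
    have h1 : ((∑ i ∈ s, f i) - sumSchwartz f hb) x
        = (∑ i ∈ s, f i x) - ∑' i, f i x := by
      rw [SchwartzMap.sub_apply]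
      congr 1
      rw [← SchwartzMap.coe_coeHom, map_sum]
      simp [SchwartzMap.coeHom]
    rw [h1, ← hsplit]
    abel
  refine SchwartzMap.seminorm_le_bound ℝ k n _ (tsum_nonneg (fun i => apply_nonneg _ _)) ?_
  intro x
  have hfun : (((∑ i ∈ s, f i) - sumSchwartz f hb : SchwartzMap E F) : E → F)
      = fun y => -(∑' i : {x // x ∉ s}, f i y) := funext hcoe
  rw [hfun]
  have := tsum_decay_bound (fun i : {x // x ∉ s} => f i) hb' k n x
  calc ‖x‖ ^ k * ‖iteratedFDeriv ℝ n (fun y => -(∑' i : {x // x ∉ s}, f i y)) x‖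
      = ‖x‖ ^ k * ‖iteratedFDeriv ℝ n (fun y => ∑' i : {x // x ∉ s}, f i y) x‖ := by
        rw [show (fun y => -(∑' i : {x // x ∉ s}, f i y))
            = -(fun y => ∑' i : {x // x ∉ s}, f i y) from rfl,
          iteratedFDeriv_neg_apply, norm_neg]
    _ ≤ ∑' i : {x // x ∉ s}, SchwartzMap.seminorm ℝ k n (f i) := this

/-! ### Derivative bounds for time-frequency shifts -/

/-- Iterated derivatives commute with translation. -/
lemma iteratedFDeriv_comp_sub (g : E → F) (hg : ContDiff ℝ (⊤ : ℕ∞) g) (x : E) (n : ℕ) :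
    iteratedFDeriv ℝ n (fun s => g (s - x))
      = fun t => iteratedFDeriv ℝ n g (t - x) := by
  induction n with
  | zero => ext t m; simp
  | succ n ih =>
    ext t m
    rw [iteratedFDeriv_succ_apply_left, iteratedFDeriv_succ_apply_left]
    have hdiff : DifferentiableAt ℝ (iteratedFDeriv ℝ n g) (t - x) :=
      (hg.differentiable_iteratedFDeriv
        (by exact_mod_cast WithTop.coe_lt_top n)).differentiableAt
    have hderiv : HasFDerivAt (fun s => iteratedFDeriv ℝ n g (s - x))
        (fderiv ℝ (iteratedFDeriv ℝ n g) (t - x)) t := by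
      have h1 : HasFDerivAt (fun s : E => s - x) (ContinuousLinearMap.id ℝ E) t :=
        (hasFDerivAt_id t).sub_const x
      have := hdiff.hasFDerivAt.comp t h1
      simp at this; exact this
    rw [ih, hderiv.fderiv]

variable {d : ℕ}

/-- The linear phase functional `t ↦ 2πi⟨ξ,t⟩`. -/
def phaseCLM (ξ : Ed d) : Ed d →L[ℝ] ℂ :=
  (2 * Real.pi * Complex.I : ℂ) • (Complex.ofRealCLM.comp (innerSL ℝ ξ))

lemma phaseCLM_apply (ξ t : Ed d) :
    phaseCLM ξ t = 2 * Real.pi * Complex.I * (⟪ξ, t⟫_ℝ : ℂ) := by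
  simp only [phaseCLM, ContinuousLinearMap.smul_apply, ContinuousLinearMap.comp_apply,
    Complex.ofRealCLM_apply, innerSL_apply_apply, smul_eq_mul]

lemma norm_phaseCLM_le (ξ : Ed d) : ‖phaseCLM ξ‖ ≤ 2 * Real.pi * ‖ξ‖ := by
  refine ContinuousLinearMap.opNorm_le_bound _ (by positivity) (fun t => ?_)
  rw [phaseCLM_apply]
  rw [norm_mul]
  have h1 : ‖(2 * Real.pi * Complex.I : ℂ)‖ = 2 * Real.pi := by
    simp [norm_mul, Real.pi_nonneg, abs_of_nonneg]
  have h2 : ‖((⟪ξ, t⟫_ℝ : ℝ) : ℂ)‖ ≤ ‖ξ‖ * ‖t‖ := by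
    rw [Complex.norm_real]
    exact abs_real_inner_le_norm ξ t
  calc ‖(2 * Real.pi * Complex.I : ℂ)‖ * ‖((⟪ξ, t⟫_ℝ : ℝ) : ℂ)‖
      ≤ (2 * Real.pi) * (‖ξ‖ * ‖t‖) := by
        rw [h1]; exact mul_le_mul_of_nonneg_left h2 (by positivity)
    _ = 2 * Real.pi * ‖ξ‖ * ‖t‖ := by ring

lemma contDiff_phase_exp (ξ : Ed d) {N : WithTop ℕ∞} :
    ContDiff ℝ N (fun t : Ed d => Complex.exp (phaseCLM ξ t)) :=
  Complex.contDiff_exp.comp (phaseCLM ξ).contDiff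

lemma fderiv_phase_exp (ξ : Ed d) :
    fderiv ℝ (fun t : Ed d => Complex.exp (phaseCLM ξ t))
      = fun t => Complex.exp (phaseCLM ξ t) • phaseCLM ξ := by
  ext1 t
  exact (((phaseCLM ξ).hasFDerivAt (x := t)).cexp).fderiv

lemma norm_iteratedFDeriv_phase_exp (ξ : Ed d) (n : ℕ) (t : Ed d) :
    ‖iteratedFDeriv ℝ n (fun t : Ed d => Complex.exp (phaseCLM ξ t)) t‖
      ≤ ‖phaseCLM ξ‖ ^ n := by
  induction n generalizing t with
  | zero =>
    simp only [norm_iteratedFDeriv_zero, pow_zero]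
    have : phaseCLM ξ t = ((2 * Real.pi * ⟪ξ, t⟫_ℝ : ℝ) : ℂ) * Complex.I := by
      rw [phaseCLM_apply]; push_cast; ring
    rw [this, Complex.norm_exp_ofReal_mul_I]
  | succ n ih =>
    rw [← norm_iteratedFDeriv_fderiv, fderiv_phase_exp]
    set T : ℂ →L[ℝ] (Ed d →L[ℝ] ℂ) :=
      (ContinuousLinearMap.id ℝ ℂ).smulRight (phaseCLM ξ) with hT
    have hTnorm : ∀ z : ℂ, ‖T z‖ ≤ ‖phaseCLM ξ‖ * ‖z‖ := by
      intro z
      simp only [hT, ContinuousLinearMap.smulRight_apply, ContinuousLinearMap.id_apply]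
      rw [norm_smul]
      rw [mul_comm]
    have hcomp : (fun t : Ed d => Complex.exp (phaseCLM ξ t) • phaseCLM ξ)
        = T ∘ (fun t : Ed d => Complex.exp (phaseCLM ξ t)) := by
      ext1 t
      simp [hT]
    rw [hcomp, ContinuousLinearMap.iteratedFDeriv_comp_left T
      ((contDiff_phase_exp ξ (N := (n : WithTop ℕ∞))).contDiffAt (x := t)) le_rfl]
    calc ‖T.compContinuousMultilinearMap
          (iteratedFDeriv ℝ n (fun t : Ed d => Complex.exp (phaseCLM ξ t)) t)‖
        ≤ ‖T‖ * ‖iteratedFDeriv ℝ n (fun t : Ed d => Complex.exp (phaseCLM ξ t)) t‖ :=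
          T.norm_compContinuousMultilinearMap_le _
      _ ≤ ‖phaseCLM ξ‖ * ‖phaseCLM ξ‖ ^ n := by
          refine mul_le_mul ?_ (ih t) (norm_nonneg _) (norm_nonneg _)
          exact T.opNorm_le_bound (norm_nonneg _)
            (fun z => by rw [mul_comm ‖phaseCLM ξ‖]; exact (hTnorm z).trans (by rw [mul_comm]))
      _ = ‖phaseCLM ξ‖ ^ (n + 1) := by ring

lemma pnorm_nonneg {d : ℕ} (z : Ed d × Ed d) : 0 ≤ pnorm z := Real.sqrt_nonneg _

lemma norm_fst_le_pnorm (z : Ed d × Ed d) : ‖z.1‖ ≤ pnorm z := by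
  have h : Real.sqrt (‖z.1‖ ^ 2) ≤ pnorm z :=
    Real.sqrt_le_sqrt (by nlinarith [sq_nonneg ‖z.2‖])
  rwa [Real.sqrt_sq (norm_nonneg _)] at h

lemma norm_snd_le_pnorm (z : Ed d × Ed d) : ‖z.2‖ ≤ pnorm z := by
  have h : Real.sqrt (‖z.2‖ ^ 2) ≤ pnorm z :=
    Real.sqrt_le_sqrt (by nlinarith [sq_nonneg ‖z.1‖])
  rwa [Real.sqrt_sq (norm_nonneg _)] at h

/-- Polynomial growth of the Schwartz seminorms of time-frequency shifts. -/
lemma growth (g : SchwartzMap (Ed d) ℂ) (P : Ed d × Ed d → SchwartzMap (Ed d) ℂ)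
    (hP : IsSchwartzTFS g P) (k n : ℕ) :
    ∃ B : ℝ, 0 ≤ B ∧ ∀ z, SchwartzMap.seminorm ℝ k n (P z)
      ≤ B * (1 + pnorm z) ^ (k + n) := by
  set S : ℝ := 2 ^ k * (Finset.Iic (k, n)).sup (fun m => SchwartzMap.seminorm ℝ m.1 m.2) g
    with hS
  have hS0 : 0 ≤ S := by
    rw [hS]
    have := apply_nonneg (((Finset.Iic (k, n)).sup
      (fun m => SchwartzMap.seminorm ℝ m.1 m.2)) :
      Seminorm ℝ (SchwartzMap (Ed d) ℂ)) g
    positivity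
  refine ⟨(1 + 2 * Real.pi) ^ n * S, by positivity, fun z => ?_⟩
  have hcoe : ⇑(P z) = fun t => Complex.exp (phaseCLM z.2 t) * g (t - z.1) :=
    funext fun t => by rw [hP z t, phaseCLM_apply]
  have hp0 : 0 ≤ pnorm z := pnorm_nonneg z
  have hgs : ContDiff ℝ ((n : ℕ∞) : WithTop ℕ∞) (fun t : Ed d => g (t - z.1)) := by
    have : ContDiff ℝ ((⊤ : ℕ∞) : WithTop ℕ∞) (fun t : Ed d => g (t - z.1)) :=
      g.smooth'.comp (contDiff_id.sub contDiff_const)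
    exact this.of_le (by exact_mod_cast le_top)
  set a := 2 * Real.pi * ‖z.2‖ with ha_def
  have ha : 0 ≤ a := by positivity
  refine SchwartzMap.seminorm_le_bound ℝ k n _ (by positivity) (fun t => ?_)
  rw [hcoe]
  have hmul := norm_iteratedFDeriv_mul_le (𝕜 := ℝ)
    (f := fun t : Ed d => Complex.exp (phaseCLM z.2 t))
    (g := fun t : Ed d => g (t - z.1)) (N := ((n : ℕ∞) : WithTop ℕ∞))
    (contDiff_phase_exp z.2) hgs t le_rfl
  have key : (1 + ‖t - z.1‖) ^ k
      * ‖iteratedFDeriv ℝ n (fun t : Ed d => Complex.exp (phaseCLM z.2 t) * g (t - z.1)) t‖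
      ≤ (a + 1) ^ n * S := by
    calc (1 + ‖t - z.1‖) ^ k
        * ‖iteratedFDeriv ℝ n (fun t : Ed d => Complex.exp (phaseCLM z.2 t) * g (t - z.1)) t‖
        ≤ (1 + ‖t - z.1‖) ^ k * ∑ i ∈ Finset.range (n + 1), (n.choose i : ℝ)
            * ‖iteratedFDeriv ℝ i (fun t : Ed d => Complex.exp (phaseCLM z.2 t)) t‖
            * ‖iteratedFDeriv ℝ (n - i) (fun t : Ed d => g (t - z.1)) t‖ := by
          exact mul_le_mul_of_nonneg_left hmul (by positivity)
      _ = ∑ i ∈ Finset.range (n + 1), (n.choose i : ℝ)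
            * ‖iteratedFDeriv ℝ i (fun t : Ed d => Complex.exp (phaseCLM z.2 t)) t‖
            * ((1 + ‖t - z.1‖) ^ k
              * ‖iteratedFDeriv ℝ (n - i) (fun t : Ed d => g (t - z.1)) t‖) := by
          rw [Finset.mul_sum]; exact Finset.sum_congr rfl (fun i _ => by ring)
      _ ≤ ∑ i ∈ Finset.range (n + 1), (n.choose i : ℝ) * a ^ i * S := by
          refine Finset.sum_le_sum (fun i hi => ?_)
          have hb1 : ‖iteratedFDeriv ℝ i (fun t : Ed d => Complex.exp (phaseCLM z.2 t)) t‖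
              ≤ a ^ i :=
            (norm_iteratedFDeriv_phase_exp z.2 i t).trans
              (pow_le_pow_left₀ (norm_nonneg _) (norm_phaseCLM_le z.2) i)
          have htr : iteratedFDeriv ℝ (n - i) (fun t : Ed d => g (t - z.1)) t
              = iteratedFDeriv ℝ (n - i) g (t - z.1) := by
            rw [iteratedFDeriv_comp_sub (⇑g) g.smooth' z.1 (n - i)]
          have hb2 : (1 + ‖t - z.1‖) ^ k
              * ‖iteratedFDeriv ℝ (n - i) (fun t : Ed d => g (t - z.1)) t‖ ≤ S := by
            rw [htr, hS]
            exact SchwartzMap.one_add_le_sup_seminorm_apply (m := (k, n)) le_rfl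
              (Nat.sub_le n i) g (t - z.1)
          have h2nn : (0:ℝ) ≤ (1 + ‖t - z.1‖) ^ k
              * ‖iteratedFDeriv ℝ (n - i) (fun t : Ed d => g (t - z.1)) t‖ := by positivity
          calc (n.choose i : ℝ)
              * ‖iteratedFDeriv ℝ i (fun t : Ed d => Complex.exp (phaseCLM z.2 t)) t‖
              * ((1 + ‖t - z.1‖) ^ k
                * ‖iteratedFDeriv ℝ (n - i) (fun t : Ed d => g (t - z.1)) t‖)
              ≤ (n.choose i : ℝ) * a ^ i
                * ((1 + ‖t - z.1‖) ^ k
                  * ‖iteratedFDeriv ℝ (n - i) (fun t : Ed d => g (t - z.1)) t‖) := by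
                gcongr
            _ ≤ (n.choose i : ℝ) * a ^ i * S := by gcongr
      _ = (a + 1) ^ n * S := by
          rw [← Finset.sum_mul, add_pow]
          congr 1
          exact Finset.sum_congr rfl (fun i _ => by rw [one_pow]; ring)
  have htle : ‖t‖ ≤ (1 + ‖z.1‖) * (1 + ‖t - z.1‖) := by
    have h1 : ‖t‖ ≤ ‖t - z.1‖ + ‖z.1‖ := by
      calc ‖t‖ = ‖(t - z.1) + z.1‖ := by rw [sub_add_cancel]
        _ ≤ ‖t - z.1‖ + ‖z.1‖ := norm_add_le _ _
    nlinarith [norm_nonneg (t - z.1), norm_nonneg z.1]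
  have h1 : (1 + ‖z.1‖) ^ k ≤ (1 + pnorm z) ^ k :=
    pow_le_pow_left₀ (by positivity) (by linarith [norm_fst_le_pnorm z]) k
  have h2 : (a + 1) ^ n ≤ ((1 + 2 * Real.pi) * (1 + pnorm z)) ^ n := by
    refine pow_le_pow_left₀ (by positivity) ?_ n
    have := norm_snd_le_pnorm z
    nlinarith [Real.pi_pos]
  calc ‖t‖ ^ k
      * ‖iteratedFDeriv ℝ n (fun t : Ed d => Complex.exp (phaseCLM z.2 t) * g (t - z.1)) t‖
      ≤ ((1 + ‖z.1‖) * (1 + ‖t - z.1‖)) ^ k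
        * ‖iteratedFDeriv ℝ n
            (fun t : Ed d => Complex.exp (phaseCLM z.2 t) * g (t - z.1)) t‖ := by
        exact mul_le_mul_of_nonneg_right (pow_le_pow_left₀ (norm_nonneg t) htle k)
          (norm_nonneg _)
    _ = (1 + ‖z.1‖) ^ k * ((1 + ‖t - z.1‖) ^ k
        * ‖iteratedFDeriv ℝ n
            (fun t : Ed d => Complex.exp (phaseCLM z.2 t) * g (t - z.1)) t‖) := by
        rw [mul_pow]; ring
    _ ≤ (1 + ‖z.1‖) ^ k * ((a + 1) ^ n * S) := by
        exact mul_le_mul_of_nonneg_left key (by positivity)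
    _ ≤ (1 + pnorm z) ^ k * (((1 + 2 * Real.pi) * (1 + pnorm z)) ^ n * S) := by
        gcongr ?_ * (?_ * S)
    _ = (1 + 2 * Real.pi) ^ n * S * (1 + pnorm z) ^ (k + n) := by
        rw [mul_pow, pow_add]; ring

/-! ### The lattice lower bound -/

lemma pnorm_latt (A : Matrix (Fin (d + d)) (Fin (d + d)) ℝ) (k : Idx d) :
    pnorm (latt A k)
      = Real.sqrt (∑ j : Fin (d + d), (A.mulVec (fun j' => (k j' : ℝ)) j) ^ 2) := by
  rw [pnorm, EuclideanSpace.norm_eq ((latt A k).1), EuclideanSpace.norm_eq ((latt A k).2),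
    Real.sq_sqrt (by positivity), Real.sq_sqrt (by positivity)]
  congr 1
  rw [Fin.sum_univ_add (f := fun j : Fin (d + d) => (A.mulVec (fun j' => (k j' : ℝ)) j) ^ 2)]
  congr 1
  · simp [latt, Real.norm_eq_abs, _root_.sq_abs]
  · simp [latt, Real.norm_eq_abs, _root_.sq_abs]

lemma exists_latt_lower (A : Matrix (Fin (d + d)) (Fin (d + d)) ℝ) (hA : IsUnit A.det) :
    ∃ M : ℝ, 1 ≤ M ∧ ∀ μ : Idx d, μ ≠ 0 → ∀ i,
      (1 + |(μ i : ℝ)|) ≤ M * (1 + pnorm (latt A μ)) := by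
  have hinv : Invertible A := A.invertibleOfIsUnitDet hA
  let ℓ : (Fin (d + d) → ℝ) ≃ₗ[ℝ] (Fin (d + d) → ℝ) := A.toLinearEquiv' hinv
  let ι := WithLp.linearEquiv 2 ℝ (Fin (d + d) → ℝ)
  let L : EuclideanSpace ℝ (Fin (d + d)) ≃ₗ[ℝ] EuclideanSpace ℝ (Fin (d + d)) :=
    ι.trans (ℓ.trans ι.symm)
  let e := L.toContinuousLinearEquiv
  set K : ℝ := max
    ‖(e.symm : EuclideanSpace ℝ (Fin (d + d)) →L[ℝ] EuclideanSpace ℝ (Fin (d + d)))‖ 1 with hK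
  have hK1 : 1 ≤ K := le_max_right _ _
  have hKv : ∀ v : EuclideanSpace ℝ (Fin (d + d)), ‖v‖ ≤ K * ‖e v‖ := by
    intro v
    have : ‖v‖ = ‖e.symm (e v)‖ := by rw [e.symm_apply_apply]
    rw [this]
    calc ‖e.symm (e v)‖
        ≤ ‖(e.symm : EuclideanSpace ℝ (Fin (d + d)) →L[ℝ] EuclideanSpace ℝ (Fin (d + d)))‖
          * ‖e v‖ := (e.symm : EuclideanSpace ℝ (Fin (d + d)) →L[ℝ]
            EuclideanSpace ℝ (Fin (d + d))).le_opNorm (e v)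
      _ ≤ K * ‖e v‖ := by gcongr; exact le_max_left _ _
  refine ⟨2 * K, by linarith, fun μ hμ i => ?_⟩
  set v : EuclideanSpace ℝ (Fin (d + d)) := WithLp.toLp 2 (fun j => (μ j : ℝ)) with hv
  have hpn : pnorm (latt A μ) = ‖e v‖ := by
    rw [pnorm_latt, EuclideanSpace.norm_eq (e v)]
    congr 1
    refine Finset.sum_congr rfl (fun j _ => ?_)
    have : e v j = A.mulVec (fun j' => (μ j' : ℝ)) j := rfl
    rw [this, Real.norm_eq_abs, _root_.sq_abs]
  have hcoord : |(μ i : ℝ)| ≤ ‖v‖ := by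
    rw [EuclideanSpace.norm_eq]
    have : |(μ i : ℝ)| = Real.sqrt ((μ i : ℝ) ^ 2) := by rw [Real.sqrt_sq_eq_abs]
    rw [this]
    apply Real.sqrt_le_sqrt
    have hmem : (i : Fin (d + d)) ∈ Finset.univ := Finset.mem_univ i
    calc ((μ i : ℝ)) ^ 2 ≤ ‖v i‖ ^ 2 := by
          simp [hv, Real.norm_eq_abs, _root_.sq_abs]
      _ ≤ ∑ j, ‖v j‖ ^ 2 := Finset.single_le_sum (f := fun j => ‖v j‖ ^ 2)
          (fun j _ => by positivity) hmem
  have hone : 1 ≤ ‖v‖ := by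
    obtain ⟨j, hj⟩ : ∃ j, μ j ≠ 0 := by
      by_contra h
      push_neg at h
      exact hμ (funext h)
    have h1 : (1 : ℝ) ≤ |(μ j : ℝ)| := by
      have := Int.one_le_abs (by simpa using hj)
      exact_mod_cast this
    refine h1.trans ?_
    rw [EuclideanSpace.norm_eq]
    have : |(μ j : ℝ)| = Real.sqrt ((μ j : ℝ) ^ 2) := by rw [Real.sqrt_sq_eq_abs]
    rw [this]
    apply Real.sqrt_le_sqrt
    calc ((μ j : ℝ)) ^ 2 ≤ ‖v j‖ ^ 2 := by simp [hv, Real.norm_eq_abs, _root_.sq_abs]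
      _ ≤ ∑ j', ‖v j'‖ ^ 2 := Finset.single_le_sum (f := fun j' => ‖v j'‖ ^ 2)
          (fun j' _ => by positivity) (Finset.mem_univ j)
  have hKe : ‖v‖ ≤ K * ‖e v‖ := hKv v
  have hepos : 0 ≤ ‖e v‖ := norm_nonneg _
  calc (1 : ℝ) + |(μ i : ℝ)| ≤ ‖v‖ + ‖v‖ := add_le_add hone hcoord
    _ = 2 * ‖v‖ := by ring
    _ ≤ 2 * (K * ‖e v‖) := by gcongr
    _ ≤ 2 * K * (1 + pnorm (latt A μ)) := by rw [hpn]; nlinarith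

/-! ### Summability over the integer lattice -/

lemma summable_w : Summable (fun m : ℤ => ((1 + |(m : ℝ)|) ^ 2)⁻¹) := by
  have hnat : Summable (fun n : ℕ => ((1 + (n : ℝ)) ^ 2)⁻¹) := by
    have h := (summable_nat_add_iff 1).mpr
      (Real.summable_one_div_nat_pow.mpr (one_lt_two (α := ℕ)))
    refine h.congr (fun n => ?_)
    push_cast
    rw [one_div, add_comm]
  refine Summable.of_nat_of_neg (hnat.congr fun n => ?_) (hnat.congr fun n => ?_)
  · simp
  · simp

lemma summable_prod_int (N : ℕ) (w : ℤ → ℝ) (h0 : ∀ m, 0 ≤ w m) (hw : Summable w) :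
    Summable (fun μ : Fin N → ℤ => ∏ i, w (μ i)) := by
  induction N with
  | zero => exact Summable.of_finite
  | succ N ih =>
    have hmul := hw.mul_of_nonneg ih h0
      (fun ν => Finset.prod_nonneg fun i _ => h0 _)
    have := (Fin.consEquiv (fun _ : Fin (N + 1) => ℤ)).summable_iff
      (f := fun μ : Fin (N + 1) → ℤ => ∏ i, w (μ i))
    rw [← this]
    refine hmul.congr (fun p => ?_)
    simp only [Function.comp_apply, Fin.consEquiv_apply]
    rw [Fin.prod_univ_succ]
    congr 1

/-! ### Seminorm of a complex scalar multiple -/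

lemma seminorm_csmul_le (a : ℂ) (h : SchwartzMap (Ed d) ℂ) (k n : ℕ) :
    SchwartzMap.seminorm ℝ k n (a • h) ≤ ‖a‖ * SchwartzMap.seminorm ℝ k n h := by
  refine SchwartzMap.seminorm_le_bound ℝ k n _ (by positivity) (fun x => ?_)
  have hcoe : ⇑(a • h) = fun y => a • (h y) := rfl
  rw [hcoe]
  rw [iteratedFDeriv_const_smul_apply' (𝕜 := ℝ) (a := a) (f := ⇑h) (i := n) (x := x)
    (h.smooth'.of_le (by exact_mod_cast le_top)).contDiffAt, norm_smul]
  calc ‖x‖ ^ k * (‖a‖ * ‖iteratedFDeriv ℝ n (⇑h) x‖)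
      = ‖a‖ * (‖x‖ ^ k * ‖iteratedFDeriv ℝ n (⇑h) x‖) := by ring
    _ ≤ ‖a‖ * SchwartzMap.seminorm ℝ k n h :=
        mul_le_mul_of_nonneg_left (SchwartzMap.le_seminorm ℝ k n h x) (norm_nonneg a)

end Stmt10Aux

open Stmt10Aux in
/-- For a Schwartz window `g`, a lattice `Aℤ^{2d}` and rapidly
decaying coefficients `c`, the series `Σ_μ c(μ) π(μ)g` converges unconditionally in the
topology of `𝒮(ℝᵈ)` (so its sum is a Schwartz function). -/
theorem statement10 (d : ℕ) (A : Matrix (Fin (d + d)) (Fin (d + d)) ℝ) (hA : IsUnit A.det)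
    (g : SchwartzMap (Ed d) ℂ)
    (P : Ed d × Ed d → SchwartzMap (Ed d) ℂ) (hP : IsSchwartzTFS g P)
    (c : Idx d → ℂ)
    (hc : ∀ s : ℝ, 0 ≤ s → ∃ C : ℝ, ∀ μ : Idx d,
      ‖c μ‖ ≤ C * (1 + pnorm (latt A μ)) ^ (-s)) :
    Summable (fun μ : Idx d => c μ • P (latt A μ)) := by
  classical
  refine summable_schwartz _ (fun k n => ?_)
  obtain ⟨B, hB0, hB⟩ := growth g P hP k n
  obtain ⟨M, hM1, hM⟩ := exists_latt_lower A hA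
  set s : ℝ := ((k + n + 2 * (d + d) : ℕ) : ℝ) with hs_def
  have hs0 : (0 : ℝ) ≤ s := by positivity
  obtain ⟨C, hC⟩ := hc s hs0
  set C' : ℝ := max C 0 with hC'
  have hC'0 : 0 ≤ C' := le_max_right _ _
  have hC'le : ∀ μ : Idx d, ‖c μ‖ ≤ C' * (1 + pnorm (latt A μ)) ^ (-s) := by
    intro μ
    refine (hC μ).trans ?_
    have : (0:ℝ) ≤ (1 + pnorm (latt A μ)) ^ (-s) :=
      Real.rpow_nonneg (by linarith [pnorm_nonneg (latt A μ)]) _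
    exact mul_le_mul_of_nonneg_right (le_max_left _ _) this
  set E : ℕ := 2 * (d + d) with hE
  set D : ℝ := C' * B * M ^ E with hD
  have hD0 : 0 ≤ D := by positivity
  -- the dominating summable function
  have hdom : Summable (fun μ : Idx d => D * ∏ i, ((1 + |(μ i : ℝ)|) ^ 2)⁻¹) := by
    refine Summable.mul_left D ?_
    exact summable_prod_int (d + d) (fun m => ((1 + |(m : ℝ)|) ^ 2)⁻¹)
      (fun m => by positivity) summable_w
  refine Summable.of_norm_bounded_eventually hdom ?_
  have hfin : ({(0 : Idx d)} : Set (Idx d)).Finite := Set.finite_singleton _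
  refine Filter.mem_of_superset (hfin.compl_mem_cofinite) ?_
  intro μ hμ0
  have hμ : μ ≠ 0 := by simpa using hμ0
  simp only [Set.mem_setOf_eq]
  set p : ℝ := pnorm (latt A μ) with hp_def
  have hp0 : 0 ≤ p := pnorm_nonneg _
  have hp1 : (0:ℝ) < 1 + p := by linarith
  have hnorm_eq : ‖SchwartzMap.seminorm ℝ k n (c μ • P (latt A μ))‖
      = SchwartzMap.seminorm ℝ k n (c μ • P (latt A μ)) := by
    rw [Real.norm_eq_abs, _root_.abs_of_nonneg (apply_nonneg _ _)]
  rw [hnorm_eq]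
  have hprod_pos : (0:ℝ) < ∏ i, (1 + |(μ i : ℝ)|) ^ 2 :=
    Finset.prod_pos (fun i _ => by positivity)
  have hprodle : ∏ i, (1 + |(μ i : ℝ)|) ^ 2 ≤ (M * (1 + p)) ^ E := by
    have hstep : ∀ i : Fin (d + d), (1 + |(μ i : ℝ)|) ^ 2 ≤ (M * (1 + p)) ^ 2 := by
      intro i
      have := hM μ hμ i
      have h0 : (0:ℝ) ≤ 1 + |(μ i : ℝ)| := by positivity
      exact pow_le_pow_left₀ h0 (by rw [hp_def] at *; exact this) 2
    calc ∏ i, (1 + |(μ i : ℝ)|) ^ 2 ≤ ∏ _i : Fin (d + d), (M * (1 + p)) ^ 2 :=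
          Finset.prod_le_prod (fun i _ => by positivity) (fun i _ => hstep i)
      _ = ((M * (1 + p)) ^ 2) ^ (d + d) := by
          rw [Finset.prod_const, Finset.card_univ]; simp
      _ = (M * (1 + p)) ^ E := by rw [hE, ← pow_mul]
  have hrpow_eq : (1 + p) ^ (-s) * (1 + p) ^ (k + n : ℕ) = ((1 + p) ^ E)⁻¹ := by
    rw [← Real.rpow_natCast (1 + p) (k + n), ← Real.rpow_add hp1]
    rw [show -s + ((k + n : ℕ) : ℝ) = -((E : ℕ) : ℝ) by
      rw [hs_def, hE]; push_cast; ring]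
    rw [Real.rpow_neg (by linarith), Real.rpow_natCast]
  have hinvle : ((1 + p) ^ E)⁻¹ ≤ M ^ E * (∏ i, (1 + |(μ i : ℝ)|) ^ 2)⁻¹ := by
    have hMp : (M * (1 + p)) ^ E = M ^ E * (1 + p) ^ E := mul_pow _ _ _
    have h1 : (∏ i, (1 + |(μ i : ℝ)|) ^ 2)⁻¹ ≥ ((M * (1 + p)) ^ E)⁻¹ := by
      exact inv_anti₀ hprod_pos hprodle
    calc ((1 + p) ^ E)⁻¹ = M ^ E * ((M * (1 + p)) ^ E)⁻¹ := by
          rw [hMp, mul_inv]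
          rw [← mul_assoc, mul_inv_cancel₀ (by positivity : (M:ℝ) ^ E ≠ 0), one_mul]
      _ ≤ M ^ E * (∏ i, (1 + |(μ i : ℝ)|) ^ 2)⁻¹ := by
          exact mul_le_mul_of_nonneg_left h1 (by positivity)
  calc SchwartzMap.seminorm ℝ k n (c μ • P (latt A μ))
      ≤ ‖c μ‖ * SchwartzMap.seminorm ℝ k n (P (latt A μ)) :=
        seminorm_csmul_le (c μ) (P (latt A μ)) k n
    _ ≤ (C' * (1 + p) ^ (-s)) * (B * (1 + p) ^ (k + n : ℕ)) := by
        refine mul_le_mul (hC'le μ) (hB (latt A μ)) (apply_nonneg _ _) ?_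
        have : (0:ℝ) ≤ (1 + p) ^ (-s) := Real.rpow_nonneg (by linarith) _
        positivity
    _ = (C' * B) * ((1 + p) ^ (-s) * (1 + p) ^ (k + n : ℕ)) := by ring
    _ = (C' * B) * ((1 + p) ^ E)⁻¹ := by rw [hrpow_eq]
    _ ≤ (C' * B) * (M ^ E * (∏ i, (1 + |(μ i : ℝ)|) ^ 2)⁻¹) := by
        exact mul_le_mul_of_nonneg_left hinvle (by positivity)
    _ = D * (∏ i, (1 + |(μ i : ℝ)|) ^ 2)⁻¹ := by rw [hD]; ring
    _ = D * ∏ i, ((1 + |(μ i : ℝ)|) ^ 2)⁻¹ := by rw [Finset.prod_inv_distrib]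
end
end
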